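/- arXiv:1612.03824 — 3 statements merged into one kernel-verified Lean document; each statement's English description precedes it below -/
import Mathlib

section
/- Let R > 0, C > 0, M > 0 and L > 0. Let b : ℝ^d → ℝ^d satisfy, for all x, y ∈ ℝ^d with |x| ≤ R + 1 and |y| ≤ R + 1, the bounds ⟨b(x) − b(y), x − y⟩ ≤ C |x − y|² and |b(y)| ≤ √M. Let η : ℝ^d → ℝ satisfy 0 ≤ η(x) ≤ 1 for all x, η(x) = 1 for |x| ≤ R, η(x) = 0 for |x| > R + 1, and |η(x) − η(y)| ≤ L |x − y| for all x, y. Then for ALL x, y ∈ ℝ^d one has ⟨η(x) b(x) − η(y) b(y), x − y⟩ ≤ (C + √M · L) |x − y|². -/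
/-! If `y` lies in the ball where `b` is controlled, split
`η x • b x - η y • b y = η x • (b x - b y) + (η x - η y) • b y`: the first term is handled by the
one-sided Lipschitz bound when `x` is in the ball too and vanishes otherwise (as `η x = 0`), the second
by Cauchy–Schwarz, `|b y| ≤ √M` and the Lipschitz bound on `η`. The expression is symmetric in `x, y`,
and it vanishes when both points lie outside the ball. -/

open scoped RealInnerProductSpace

section CutoffDrift

variable {E : Type*} [NormedAddCommGroup E] [InnerProductSpace ℝ E] {f : E → E} {η : E → ℝ}
  {x y : E}

lemma inner_smul_sub_smul_le {A K L : ℝ} (hfx : η x * ⟪f x - f y, x - y⟫ ≤ A * ‖x - y‖ ^ 2)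
    (hη : |η x - η y| ≤ L * ‖x - y‖) (hfy : ‖f y‖ ≤ K) :
    ⟪η x • f x - η y • f y, x - y⟫ ≤ (A + K * L) * ‖x - y‖ ^ 2 := by
  have hsplit : η x • f x - η y • f y = η x • (f x - f y) + (η x - η y) • f y := by
    rw [smul_sub, sub_smul]; abel
  have hcross : (η x - η y) * ⟪f y, x - y⟫ ≤ K * L * ‖x - y‖ ^ 2 :=
    calc (η x - η y) * ⟪f y, x - y⟫ ≤ |η x - η y| * |⟪f y, x - y⟫| := by
          rw [← abs_mul]; exact le_abs_self _
      _ ≤ (L * ‖x - y‖) * (K * ‖x - y‖) := by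
          refine mul_le_mul hη ((abs_real_inner_le_norm _ _).trans ?_) (abs_nonneg _)
            ((abs_nonneg _).trans hη)
          gcongr
      _ = K * L * ‖x - y‖ ^ 2 := by ring
  rw [hsplit, inner_add_left, real_inner_smul_left, real_inner_smul_left]
  linarith

lemma cutoff_mul_inner_sub_le {ρ C : ℝ} (hC : 0 ≤ C)
    (hosl : ∀ x y : E, ‖x‖ ≤ ρ → ‖y‖ ≤ ρ → ⟪f x - f y, x - y⟫ ≤ C * ‖x - y‖ ^ 2)
    (hηx : 0 ≤ η x ∧ η x ≤ 1) (hη0 : ∀ x : E, ρ < ‖x‖ → η x = 0) (hy : ‖y‖ ≤ ρ) :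
    η x * ⟪f x - f y, x - y⟫ ≤ C * ‖x - y‖ ^ 2 := by
  rcases le_or_gt ‖x‖ ρ with hx | hx
  · have hle := hosl x y hx hy
    rcases le_or_gt 0 ⟪f x - f y, x - y⟫ with hpos | hneg
    · nlinarith [hηx.1, hηx.2]
    · nlinarith [hηx.1, sq_nonneg ‖x - y‖]
  · rw [hη0 x hx, zero_mul]
    positivity

end CutoffDrift

theorem truncated_drift_one_sided_lipschitz_general {d : ℕ}
    (R C M L : ℝ) (hC : 0 < C)
    (b : EuclideanSpace ℝ (Fin d) → EuclideanSpace ℝ (Fin d))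
    (η : EuclideanSpace ℝ (Fin d) → ℝ)
    (hb_osl : ∀ x y : EuclideanSpace ℝ (Fin d), ‖x‖ ≤ R + 1 → ‖y‖ ≤ R + 1 →
        ⟪b x - b y, x - y⟫ ≤ C * ‖x - y‖ ^ 2)
    (hb_bdd : ∀ y : EuclideanSpace ℝ (Fin d), ‖y‖ ≤ R + 1 → ‖b y‖ ≤ Real.sqrt M)
    (hη01 : ∀ x, 0 ≤ η x ∧ η x ≤ 1)
    (hη0 : ∀ x : EuclideanSpace ℝ (Fin d), R + 1 < ‖x‖ → η x = 0)
    (hηLip : ∀ x y : EuclideanSpace ℝ (Fin d), |η x - η y| ≤ L * ‖x - y‖) :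
    ∀ x y : EuclideanSpace ℝ (Fin d),
      ⟪η x • b x - η y • b y, x - y⟫ ≤ (C + Real.sqrt M * L) * ‖x - y‖ ^ 2 := by
  have hinside : ∀ x y, ‖y‖ ≤ R + 1 →
      ⟪η x • b x - η y • b y, x - y⟫ ≤ (C + Real.sqrt M * L) * ‖x - y‖ ^ 2 := fun x y hy =>
    inner_smul_sub_smul_le (cutoff_mul_inner_sub_le hC.le hb_osl (hη01 x) hη0 hy) (hηLip x y)
      (hb_bdd y hy)
  intro x y
  rcases le_or_gt ‖y‖ (R + 1) with hy | hy
  · exact hinside x y hy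
  rcases le_or_gt ‖x‖ (R + 1) with hx | hx
  · rw [← inner_neg_neg, neg_sub, neg_sub, norm_sub_rev]
    exact hinside y x hx
  · have hLxy : 0 ≤ L * ‖x - y‖ := (abs_nonneg _).trans (hηLip x y)
    rw [hη0 x hx, hη0 y hy, zero_smul, zero_smul, sub_zero, inner_zero_left]
    nlinarith [mul_nonneg (mul_nonneg (Real.sqrt_nonneg M) hLxy) (norm_nonneg (x - y)),
      mul_nonneg hC.le (sq_nonneg ‖x - y‖)]

theorem truncated_drift_one_sided_lipschitz {d : ℕ}
    (R C M L : ℝ) (hR : 0 < R) (hC : 0 < C) (hM : 0 < M) (hL : 0 < L)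
    (b : EuclideanSpace ℝ (Fin d) → EuclideanSpace ℝ (Fin d))
    (η : EuclideanSpace ℝ (Fin d) → ℝ)
    (hb_osl : ∀ x y : EuclideanSpace ℝ (Fin d), ‖x‖ ≤ R + 1 → ‖y‖ ≤ R + 1 →
        ⟪b x - b y, x - y⟫ ≤ C * ‖x - y‖ ^ 2)
    (hb_bdd : ∀ y : EuclideanSpace ℝ (Fin d), ‖y‖ ≤ R + 1 → ‖b y‖ ≤ Real.sqrt M)
    (hη01 : ∀ x, 0 ≤ η x ∧ η x ≤ 1)
    (hη1 : ∀ x : EuclideanSpace ℝ (Fin d), ‖x‖ ≤ R → η x = 1)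
    (hη0 : ∀ x : EuclideanSpace ℝ (Fin d), R + 1 < ‖x‖ → η x = 0)
    (hηLip : ∀ x y : EuclideanSpace ℝ (Fin d), |η x - η y| ≤ L * ‖x - y‖) :
    ∀ x y : EuclideanSpace ℝ (Fin d),
      ⟪η x • b x - η y • b y, x - y⟫ ≤ (C + Real.sqrt M * L) * ‖x - y‖ ^ 2 :=
  truncated_drift_one_sided_lipschitz_general R C M L hC b η hb_osl hb_bdd hη01 hη0 hηLip
end

section
/- Let R > 0, S > 0, M > 0 and L > 0. Let g : ℝ^d × U → ℝ^d be such that for each x the map u ↦ g(x,u) is measurable and square ν-integrable, and for all x, y ∈ ℝ^d with |x| ≤ R + 1 and |y| ≤ R + 1 one has ∫_U |g(x,u) − g(y,u)|² ν(du) ≤ S |x − y|² and ∫_U |g(y,u)|² ν(du) ≤ M. Let η : ℝ^d → ℝ satisfy 0 ≤ η(x) ≤ 1 for all x, η(x) = 1 for |x| ≤ R, η(x) = 0 for |x| > R + 1, and |η(x) − η(y)| ≤ L |x − y| for all x, y. Then for ALL x, y ∈ ℝ^d one has ∫_U |η(x) g(x,u) − η(y) g(y,u)|² ν(du) ≤ (2S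 + 2M L²) |x − y|². -/
/-!
Write `η x • g x - η y • g y = η x • (g x - g y) + (η x - η y) • g y`, so that
`‖η x • g x - η y • g y‖² ≤ 2 η(x)² ‖g x - g y‖² + 2 (η x - η y)² ‖g y‖²`.
When `y` lies in the ball `|y| ≤ R + 1`, integrating bounds the first term by `2 S |x - y|²`
(it vanishes when `x` is outside the ball, since then `η x = 0`) and the second by
`2 L² |x - y|² M`. By symmetry the same holds when `x` lies in the ball, and when both points
lie outside it the integrand vanishes.
-/

open MeasureTheory

section

variable {E U : Type*} [NormedAddCommGroup E] [MeasurableSpace U] {ν : Measure U}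

theorem integrable_norm_sub_sq {f h : U → E} (hf : AEStronglyMeasurable f ν)
    (hh : AEStronglyMeasurable h ν) (hf2 : Integrable (fun u => ‖f u‖ ^ 2) ν)
    (hh2 : Integrable (fun u => ‖h u‖ ^ 2) ν) :
    Integrable (fun u => ‖f u - h u‖ ^ 2) ν :=
  (((memLp_two_iff_integrable_sq_norm hf).2 hf2).sub
    ((memLp_two_iff_integrable_sq_norm hh).2 hh2)).integrable_norm_pow two_ne_zero

variable [NormedSpace ℝ E]

theorem norm_smul_sub_smul_sq_le (a b : ℝ) (v w : E) :
    ‖a • v - b • w‖ ^ 2 ≤ 2 * a ^ 2 * ‖v - w‖ ^ 2 + 2 * (a - b) ^ 2 * ‖w‖ ^ 2 := by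
  have hsplit : a • v - b • w = a • (v - w) + (a - b) • w := by
    rw [smul_sub, sub_smul]; abel
  calc ‖a • v - b • w‖ ^ 2 ≤ (‖a • (v - w)‖ + ‖(a - b) • w‖) ^ 2 := by
        rw [hsplit]; gcongr; exact norm_add_le _ _
    _ ≤ 2 * (‖a • (v - w)‖ ^ 2 + ‖(a - b) • w‖ ^ 2) := add_sq_le
    _ = 2 * a ^ 2 * ‖v - w‖ ^ 2 + 2 * (a - b) ^ 2 * ‖w‖ ^ 2 := by
        simp only [norm_smul, Real.norm_eq_abs, mul_pow, sq_abs]; ring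

theorem integral_norm_smul_sub_smul_sq_le (a b : ℝ) {f h : U → E}
    (hf : AEStronglyMeasurable f ν) (hh : AEStronglyMeasurable h ν)
    (hf2 : Integrable (fun u => ‖f u‖ ^ 2) ν) (hh2 : Integrable (fun u => ‖h u‖ ^ 2) ν) :
    ∫ u, ‖a • f u - b • h u‖ ^ 2 ∂ν ≤
      2 * a ^ 2 * ∫ u, ‖f u - h u‖ ^ 2 ∂ν + 2 * (a - b) ^ 2 * ∫ u, ‖h u‖ ^ 2 ∂ν := by
  have hsub := integrable_norm_sub_sq hf hh hf2 hh2
  rw [← integral_const_mul, ← integral_const_mul,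
    ← integral_add (hsub.const_mul _) (hh2.const_mul _)]
  exact integral_mono_of_nonneg (.of_forall fun _ => sq_nonneg _)
    ((hsub.const_mul _).add (hh2.const_mul _))
    (.of_forall fun u => norm_smul_sub_smul_sq_le a b (f u) (h u))

variable {X : Type*} [PseudoMetricSpace X] {K : Set X} {g : X → U → E} {η : X → ℝ}

theorem integral_norm_cutoff_sub_sq_le_of_mem_right {S M L : ℝ} (hS : 0 ≤ S)
    (hg_meas : ∀ x, AEStronglyMeasurable (g x) ν)
    (hg_int : ∀ x, Integrable (fun u => ‖g x u‖ ^ 2) ν)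
    (hg_lip : ∀ x ∈ K, ∀ y ∈ K, ∫ u, ‖g x u - g y u‖ ^ 2 ∂ν ≤ S * dist x y ^ 2)
    (hg_bdd : ∀ y ∈ K, ∫ u, ‖g y u‖ ^ 2 ∂ν ≤ M)
    (hη_le : ∀ x, |η x| ≤ 1) (hη_supp : ∀ x ∉ K, η x = 0)
    (hη_lip : ∀ x y, |η x - η y| ≤ L * dist x y) (x : X) {y : X} (hy : y ∈ K) :
    ∫ u, ‖η x • g x u - η y • g y u‖ ^ 2 ∂ν ≤ (2 * S + 2 * M * L ^ 2) * dist x y ^ 2 := by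
  have hfirst : η x ^ 2 * ∫ u, ‖g x u - g y u‖ ^ 2 ∂ν ≤ S * dist x y ^ 2 := by
    by_cases hx : x ∈ K
    · have hη_sq : η x ^ 2 ≤ 1 := by
        rw [← sq_abs]; exact pow_le_one₀ (abs_nonneg _) (hη_le x)
      calc η x ^ 2 * ∫ u, ‖g x u - g y u‖ ^ 2 ∂ν ≤ 1 * ∫ u, ‖g x u - g y u‖ ^ 2 ∂ν := by
            gcongr
        _ ≤ S * dist x y ^ 2 := by rw [one_mul]; exact hg_lip x hx y hy
    · rw [hη_supp x hx, zero_pow two_ne_zero, zero_mul]; positivity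
  have hsecond : (η x - η y) ^ 2 * ∫ u, ‖g y u‖ ^ 2 ∂ν ≤ L ^ 2 * dist x y ^ 2 * M := by
    have hη_sq : (η x - η y) ^ 2 ≤ L ^ 2 * dist x y ^ 2 := by
      rw [← sq_abs, ← mul_pow]; exact pow_le_pow_left₀ (abs_nonneg _) (hη_lip x y) 2
    exact mul_le_mul hη_sq (hg_bdd y hy) (integral_nonneg fun _ => sq_nonneg _)
      ((sq_nonneg _).trans hη_sq)
  calc ∫ u, ‖η x • g x u - η y • g y u‖ ^ 2 ∂ν
      ≤ 2 * η x ^ 2 * ∫ u, ‖g x u - g y u‖ ^ 2 ∂ν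
          + 2 * (η x - η y) ^ 2 * ∫ u, ‖g y u‖ ^ 2 ∂ν :=
        integral_norm_smul_sub_smul_sq_le _ _ (hg_meas x) (hg_meas y) (hg_int x) (hg_int y)
    _ ≤ (2 * S + 2 * M * L ^ 2) * dist x y ^ 2 := by linarith

theorem integral_norm_cutoff_sub_sq_le_of_forall_mem_right {C : ℝ} (hC : 0 ≤ C)
    (hη_supp : ∀ x ∉ K, η x = 0)
    (h : ∀ x, ∀ y ∈ K, ∫ u, ‖η x • g x u - η y • g y u‖ ^ 2 ∂ν ≤ C * dist x y ^ 2)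
    (x y : X) :
    ∫ u, ‖η x • g x u - η y • g y u‖ ^ 2 ∂ν ≤ C * dist x y ^ 2 := by
  by_cases hy : y ∈ K
  · exact h x y hy
  by_cases hx : x ∈ K
  · simpa only [norm_sub_rev (η y • g y _), dist_comm y x] using h y x hx
  · simp only [hη_supp x hx, hη_supp y hy, zero_smul, sub_zero, norm_zero,
      zero_pow two_ne_zero, integral_zero]
    positivity

end

theorem truncated_jump_coefficient_lipschitz_general {d : ℕ} {U : Type*} [MeasurableSpace U]
    (ν : Measure U)
    (R S M L : ℝ) (hS : 0 < S) (hM : 0 < M)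
    (g : EuclideanSpace ℝ (Fin d) → U → EuclideanSpace ℝ (Fin d))
    (η : EuclideanSpace ℝ (Fin d) → ℝ)
    (hg_meas : ∀ x, Measurable (g x))
    (hg_int : ∀ x, Integrable (fun u => ‖g x u‖ ^ 2) ν)
    (hg_lip : ∀ x y : EuclideanSpace ℝ (Fin d), ‖x‖ ≤ R + 1 → ‖y‖ ≤ R + 1 →
        ∫ u, ‖g x u - g y u‖ ^ 2 ∂ν ≤ S * ‖x - y‖ ^ 2)
    (hg_bdd : ∀ y : EuclideanSpace ℝ (Fin d), ‖y‖ ≤ R + 1 →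
        ∫ u, ‖g y u‖ ^ 2 ∂ν ≤ M)
    (hη01 : ∀ x, 0 ≤ η x ∧ η x ≤ 1)
    (hη0 : ∀ x : EuclideanSpace ℝ (Fin d), R + 1 < ‖x‖ → η x = 0)
    (hηLip : ∀ x y : EuclideanSpace ℝ (Fin d), |η x - η y| ≤ L * ‖x - y‖) :
    ∀ x y : EuclideanSpace ℝ (Fin d),
      ∫ u, ‖η x • g x u - η y • g y u‖ ^ 2 ∂ν
        ≤ (2 * S + 2 * M * L ^ 2) * ‖x - y‖ ^ 2 := by
  have hη_supp : ∀ x ∉ Metric.closedBall 0 (R + 1), η x = 0 := fun x hx =>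
    hη0 x (not_le.1 (mt mem_closedBall_zero_iff.2 hx))
  have hg_lip' : ∀ x ∈ Metric.closedBall 0 (R + 1), ∀ y ∈ Metric.closedBall 0 (R + 1),
      ∫ u, ‖g x u - g y u‖ ^ 2 ∂ν ≤ S * dist x y ^ 2 := fun x hx y hy => by
    simpa only [dist_eq_norm] using
      hg_lip x y (mem_closedBall_zero_iff.1 hx) (mem_closedBall_zero_iff.1 hy)
  have hg_bdd' : ∀ y ∈ Metric.closedBall 0 (R + 1), ∫ u, ‖g y u‖ ^ 2 ∂ν ≤ M :=
    fun y hy => hg_bdd y (mem_closedBall_zero_iff.1 hy)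
  have hη_le : ∀ x, |η x| ≤ 1 := fun x => abs_le.2 ⟨by linarith [(hη01 x).1], (hη01 x).2⟩
  have hη_lip : ∀ x y, |η x - η y| ≤ L * dist x y := by simpa only [dist_eq_norm] using hηLip
  intro x y
  rw [← dist_eq_norm]
  exact integral_norm_cutoff_sub_sq_le_of_forall_mem_right (by positivity) hη_supp
    (fun a b hb => integral_norm_cutoff_sub_sq_le_of_mem_right hS.le
      (fun a => (hg_meas a).aestronglyMeasurable) hg_int hg_lip' hg_bdd' hη_le hη_supp hη_lip
      a hb) x y

theorem truncated_jump_coefficient_lipschitz {d : ℕ} {U : Type*} [MeasurableSpace U]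
    (ν : Measure U) [SigmaFinite ν]
    (R S M L : ℝ) (hR : 0 < R) (hS : 0 < S) (hM : 0 < M) (hL : 0 < L)
    (g : EuclideanSpace ℝ (Fin d) → U → EuclideanSpace ℝ (Fin d))
    (η : EuclideanSpace ℝ (Fin d) → ℝ)
    (hg_meas : ∀ x, Measurable (g x))
    (hg_int : ∀ x, Integrable (fun u => ‖g x u‖ ^ 2) ν)
    (hg_lip : ∀ x y : EuclideanSpace ℝ (Fin d), ‖x‖ ≤ R + 1 → ‖y‖ ≤ R + 1 →
        ∫ u, ‖g x u - g y u‖ ^ 2 ∂ν ≤ S * ‖x - y‖ ^ 2)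
    (hg_bdd : ∀ y : EuclideanSpace ℝ (Fin d), ‖y‖ ≤ R + 1 →
        ∫ u, ‖g y u‖ ^ 2 ∂ν ≤ M)
    (hη01 : ∀ x, 0 ≤ η x ∧ η x ≤ 1)
    (hη1 : ∀ x : EuclideanSpace ℝ (Fin d), ‖x‖ ≤ R → η x = 1)
    (hη0 : ∀ x : EuclideanSpace ℝ (Fin d), R + 1 < ‖x‖ → η x = 0)
    (hηLip : ∀ x y : EuclideanSpace ℝ (Fin d), |η x - η y| ≤ L * ‖x - y‖) :
    ∀ x y : EuclideanSpace ℝ (Fin d),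
      ∫ u, ‖η x • g x u - η y • g y u‖ ^ 2 ∂ν
        ≤ (2 * S + 2 * M * L ^ 2) * ‖x - y‖ ^ 2 :=
  truncated_jump_coefficient_lipschitz_general ν R S M L hS hM g η hg_meas hg_int hg_lip hg_bdd hη01
    hη0 hηLip
end

section
/- Let K > 0 and M > 0, and let b : ℝ^d → ℝ^d be measurable with |b(x)|² ≤ M for all x, satisfying the global one-sided Lipschitz condition ⟨b(x) − b(y), x − y⟩ ≤ K |x − y|² for all x, y ∈ ℝ^d. Let j : ℝ^d → ℝ be a smooth nonnegative function with support contained in the closed unit ball and ∫_{ℝ^d} j(z) dz = 1, and for an integer k ≥ 1 define b^k(x) = ∫_{ℝ^d} b(x − z/k) j(z) dz. Set C¹(j) = ∫_{ℝ^d} |z| j(z) dz and C²(j) = ∫_{ℝ^d} |z|² j(z) dz. Then for all integers k, l ≥ 1 and all x, y ∈ ℝ^d, ⟨x − y, b^k(x) − b^l(y)⟩ ≤ 2K |x − y|² + 2K C²(j) |1/k − 1/l|² + 2√M C¹(j) |1/k − 1/l|. -/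
open MeasureTheory
open scoped RealInnerProductSpace

theorem mollified_drifts_cross_estimate {d : ℕ} (K M : ℝ) (hK : 0 < K) (hM : 0 < M)
    (b : EuclideanSpace ℝ (Fin d) → EuclideanSpace ℝ (Fin d))
    (hb_meas : Measurable b)
    (hb_bdd : ∀ x, ‖b x‖ ^ 2 ≤ M)
    (hb_osl : ∀ x y : EuclideanSpace ℝ (Fin d),
        ⟪b x - b y, x - y⟫ ≤ K * ‖x - y‖ ^ 2)
    (j : EuclideanSpace ℝ (Fin d) → ℝ)
    (hj_smooth : ContDiff ℝ (⊤ : ℕ∞) j)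
    (hj_nonneg : ∀ z, 0 ≤ j z)
    (hj_supp : Function.support j ⊆ Metric.closedBall 0 1)
    (hj_int : ∫ z, j z = 1)
    (bk : ℕ → EuclideanSpace ℝ (Fin d) → EuclideanSpace ℝ (Fin d))
    (hbk : ∀ (k : ℕ) (x), bk k x = ∫ z, j z • b (x - (k : ℝ)⁻¹ • z)) :
    ∀ (k l : ℕ), 1 ≤ k → 1 ≤ l → ∀ x y : EuclideanSpace ℝ (Fin d),
      ⟪x - y, bk k x - bk l y⟫
        ≤ 2 * K * ‖x - y‖ ^ 2
          + 2 * K * (∫ z, ‖z‖ ^ 2 * j z) * |1 / (k : ℝ) - 1 / (l : ℝ)| ^ 2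
          + 2 * Real.sqrt M * (∫ z, ‖z‖ * j z) * |1 / (k : ℝ) - 1 / (l : ℝ)| := by
  intro k l hk hl x y
  set δ : ℝ := (k : ℝ)⁻¹ - (l : ℝ)⁻¹ with hδ
  have hMs : 0 ≤ Real.sqrt M := Real.sqrt_nonneg M
  have hbnorm : ∀ w, ‖b w‖ ≤ Real.sqrt M := by
    intro w
    nlinarith [Real.sq_sqrt hM.le, hb_bdd w, norm_nonneg (b w), Real.sqrt_nonneg M]
  have hj_cont : Continuous j := hj_smooth.continuous
  have hj_cs : HasCompactSupport j := by
    apply HasCompactSupport.intro (isCompact_closedBall (0 : EuclideanSpace ℝ (Fin d)) 1)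
    intro x hx
    by_contra h
    exact hx (hj_supp h)
  have hj_integ : Integrable j := hj_cont.integrable_of_hasCompactSupport hj_cs
  have hj1 : Integrable (fun z : EuclideanSpace ℝ (Fin d) => ‖z‖ * j z) :=
    (continuous_norm.mul hj_cont).integrable_of_hasCompactSupport hj_cs.mul_left
  have hj2 : Integrable (fun z : EuclideanSpace ℝ (Fin d) => ‖z‖ ^ 2 * j z) :=
    ((continuous_norm.pow 2).mul hj_cont).integrable_of_hasCompactSupport hj_cs.mul_left
  -- integrability of the mollified integrand
  have hF_int : ∀ (c : ℝ) (p : EuclideanSpace ℝ (Fin d)),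
      Integrable (fun z => j z • b (p - c • z)) := by
    intro c p
    have hmeas : Measurable (fun z : EuclideanSpace ℝ (Fin d) => j z • b (p - c • z)) :=
      (hj_cont.measurable).smul (hb_meas.comp (measurable_const.sub (measurable_id.const_smul c)))
    apply Integrable.mono' (hj_integ.const_mul (Real.sqrt M)) hmeas.aestronglyMeasurable
    filter_upwards with z
    rw [norm_smul, Real.norm_of_nonneg (hj_nonneg z)]
    calc j z * ‖b (p - c • z)‖ ≤ j z * Real.sqrt M :=
          mul_le_mul_of_nonneg_left (hbnorm _) (hj_nonneg z)
      _ = Real.sqrt M * j z := mul_comm _ _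
  have hFk := hF_int ((k : ℝ)⁻¹) x
  have hFl := hF_int ((l : ℝ)⁻¹) y
  -- core pointwise estimate
  have core : ∀ z : EuclideanSpace ℝ (Fin d),
      ⟪x - y, b (x - (k : ℝ)⁻¹ • z) - b (y - (l : ℝ)⁻¹ • z)⟫
        ≤ 2 * K * ‖x - y‖ ^ 2 + 2 * K * δ ^ 2 * ‖z‖ ^ 2
            + 2 * Real.sqrt M * |δ| * ‖z‖ := by
    intro z
    set u : EuclideanSpace ℝ (Fin d) := x - (k : ℝ)⁻¹ • z with hu
    set v : EuclideanSpace ℝ (Fin d) := y - (l : ℝ)⁻¹ • z with hv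
    have huv : x - y = (u - v) + δ • z := by
      rw [hu, hv, hδ, sub_smul]
      abel
    have h1 : ⟪u - v, b u - b v⟫ ≤ K * ‖u - v‖ ^ 2 := by
      rw [real_inner_comm]
      exact hb_osl u v
    have h2 : δ * ⟪z, b u - b v⟫ ≤ |δ| * (‖z‖ * (2 * Real.sqrt M)) := by
      calc δ * ⟪z, b u - b v⟫ ≤ |δ * ⟪z, b u - b v⟫| := le_abs_self _
        _ = |δ| * |⟪z, b u - b v⟫| := abs_mul _ _
        _ ≤ |δ| * (‖z‖ * ‖b u - b v‖) := by
            apply mul_le_mul_of_nonneg_left _ (abs_nonneg δ)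
            exact abs_real_inner_le_norm _ _
        _ ≤ |δ| * (‖z‖ * (2 * Real.sqrt M)) := by
            apply mul_le_mul_of_nonneg_left _ (abs_nonneg δ)
            apply mul_le_mul_of_nonneg_left _ (norm_nonneg z)
            calc ‖b u - b v‖ ≤ ‖b u‖ + ‖b v‖ := norm_sub_le _ _
              _ ≤ 2 * Real.sqrt M := by linarith [hbnorm u, hbnorm v]
    have h3 : ‖u - v‖ ≤ ‖x - y‖ + |δ| * ‖z‖ := by
      have : u - v = (x - y) - δ • z := by
        rw [hu, hv, hδ, sub_smul]; abel
      rw [this]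
      calc ‖(x - y) - δ • z‖ ≤ ‖x - y‖ + ‖δ • z‖ := norm_sub_le _ _
        _ = ‖x - y‖ + |δ| * ‖z‖ := by rw [norm_smul, Real.norm_eq_abs]
    have heq : ⟪x - y, b u - b v⟫ = ⟪u - v, b u - b v⟫ + δ * ⟪z, b u - b v⟫ := by
      rw [huv, inner_add_left, real_inner_smul_left]
    have h4 : K * ‖u - v‖ ^ 2 ≤ K * (‖x - y‖ + |δ| * ‖z‖) ^ 2 :=
      mul_le_mul_of_nonneg_left (pow_le_pow_left₀ (norm_nonneg _) h3 2) hK.le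
    rw [heq, ← sq_abs δ]
    nlinarith [h1, h2, h4, mul_nonneg hK.le (sq_nonneg (‖x - y‖ - |δ| * ‖z‖))]
  -- rewrite the inner product as an integral
  have hsub : Integrable (fun z => j z • b (x - (k : ℝ)⁻¹ • z) - j z • b (y - (l : ℝ)⁻¹ • z)) :=
    hFk.sub hFl
  rw [hbk k x, hbk l y, ← integral_sub hFk hFl, ← integral_inner hsub]
  -- the dominating function
  set g : EuclideanSpace ℝ (Fin d) → ℝ := fun z =>
    (2 * K * ‖x - y‖ ^ 2) * j z + (2 * K * δ ^ 2) * (‖z‖ ^ 2 * j z)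
      + (2 * Real.sqrt M * |δ|) * (‖z‖ * j z) with hg
  have hg_int : Integrable g :=
    ((hj_integ.const_mul _).add (hj2.const_mul _)).add (hj1.const_mul _)
  have hLHS_int : Integrable (fun z =>
      ⟪x - y, j z • b (x - (k : ℝ)⁻¹ • z) - j z • b (y - (l : ℝ)⁻¹ • z)⟫) :=
    (hFk.sub hFl).const_inner _
  have hmono : (∫ z, ⟪x - y, j z • b (x - (k : ℝ)⁻¹ • z) - j z • b (y - (l : ℝ)⁻¹ • z)⟫)
      ≤ ∫ z, g z := by
    apply integral_mono hLHS_int hg_int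
    intro z
    dsimp only
    have hstep : ⟪x - y, j z • b (x - (k : ℝ)⁻¹ • z) - j z • b (y - (l : ℝ)⁻¹ • z)⟫
        = j z * ⟪x - y, b (x - (k : ℝ)⁻¹ • z) - b (y - (l : ℝ)⁻¹ • z)⟫ := by
      rw [← smul_sub, real_inner_smul_right]
    rw [hstep]
    have := mul_le_mul_of_nonneg_left (core z) (hj_nonneg z)
    calc j z * ⟪x - y, b (x - (k : ℝ)⁻¹ • z) - b (y - (l : ℝ)⁻¹ • z)⟫
        ≤ j z * (2 * K * ‖x - y‖ ^ 2 + 2 * K * δ ^ 2 * ‖z‖ ^ 2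
            + 2 * Real.sqrt M * |δ| * ‖z‖) := this
      _ = g z := by rw [hg]; ring
  refine hmono.trans_eq ?_
  have hA : Integrable (fun z : EuclideanSpace ℝ (Fin d) =>
      (2 * K * ‖x - y‖ ^ 2) * j z + (2 * K * δ ^ 2) * (‖z‖ ^ 2 * j z)) :=
    (hj_integ.const_mul _).add (hj2.const_mul _)
  have hgs : (∫ z, g z) = (2 * K * ‖x - y‖ ^ 2) * (∫ z, j z)
      + (2 * K * δ ^ 2) * (∫ z, ‖z‖ ^ 2 * j z)
      + (2 * Real.sqrt M * |δ|) * (∫ z, ‖z‖ * j z) := by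
    simp only [hg]
    rw [integral_add hA (hj1.const_mul _),
      integral_add (hj_integ.const_mul _) (hj2.const_mul _),
      integral_const_mul, integral_const_mul, integral_const_mul]
  rw [hgs, hj_int]
  have hone : |1 / (k : ℝ) - 1 / (l : ℝ)| = |δ| := by rw [hδ, one_div, one_div]
  rw [hone, sq_abs]
  ring
end
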